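/- As t → ∞, the solution U(t) = e^{tΩ}U₀ of the drag ODE converges to V_CM · (1, ε₁, ..., ε_N)ᵀ · ρ_g, i.e., all velocities converge to the center-of-mass velocity V_CM = (v_g + Σᵢ εᵢ v_{d,i})/(1 + Σᵢ εᵢ). Equivalently, in terms of U₀ = ρ_g(v_g, ε₁v_{d,1},...,ε_N v_{d,N}), the limit of e^{tΩ}U₀ is the projection of U₀ onto the kernel of Ω along the span of the other eigenvectors. -/

import Mathlib

/-!
The weighted matrix `diag(1, ε⁻¹) Ω` is symmetric with quadratic form `-∑ αₖ/εₖ (xₖ - εₖ x₀)²`,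
so `Ω` is diagonally similar to a symmetric negative semidefinite matrix. Diagonalising it, the
modes with negative eigenvalue decay and `e^{tΩ}` converges to a matrix `P` with `Ω P = 0`; hence
`e^{tΩ}U₀` tends to a multiple `c (1, ε)` of the kernel vector. The total momentum `1ᵀU` is
conserved since `1ᵀΩ = 0`, which fixes `c (1 + ∑ εₖ) = ρ_g (v_g + ∑ εₖ v_{d,k})`.
-/

open Matrix BigOperators Filter

noncomputable def dragMatrix (N : ℕ) (ε α : Fin N → ℝ) :
    Matrix (Fin (N + 1)) (Fin (N + 1)) ℝ :=
  Matrix.of fun i j =>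
    if hi : i = 0 then
      if hj : j = 0 then -∑ k, ε k * α k
      else α (j.pred hj)
    else
      if hj : j = 0 then ε (i.pred hi) * α (i.pred hi)
      else if i = j then -α (i.pred hi) else 0

open Topology

theorem Real.tendsto_exp_mul_atTop_of_nonpos {μ : ℝ} (hμ : μ ≤ 0) :
    Tendsto (fun t : ℝ => Real.exp (t * μ)) atTop (𝓝 (if μ = 0 then 1 else 0)) := by
  split_ifs with h
  · simp [h]
  · exact Real.tendsto_exp_atBot.comp
      (tendsto_id.atTop_mul_const_of_neg (lt_of_le_of_ne hμ h))

namespace Matrix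

variable {n : Type*} [Fintype n] [DecidableEq n]

theorem exists_tendsto_exp_smul_of_posSemidef_neg {S : Matrix n n ℝ} (hS : (-S).PosSemidef) :
    ∃ P, S * P = 0 ∧ Tendsto (fun t : ℝ => NormedSpace.exp (t • S)) atTop (𝓝 P) := by
  have hSh : S.IsHermitian := by simpa using hS.1.neg
  set U : Matrix n n ℝ := (hSh.eigenvectorUnitary : Matrix n n ℝ)
  set μ := hSh.eigenvalues
  have hUU : U * star U = 1 := Unitary.coe_mul_star_self _
  have hU : IsUnit U := ⟨⟨U, star U, hUU, Unitary.coe_star_mul_self _⟩, rfl⟩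
  have hS_eq : S = U * diagonal μ * U⁻¹ := by
    rw [inv_eq_right_inv hUU]; simpa using hSh.spectral_theorem
  have hμ : ∀ i, μ i ≤ 0 := fun i => by
    simpa [μ, hSh.eigenvalues_eq, neg_mulVec] using
      hS.dotProduct_mulVec_nonneg (hSh.eigenvectorBasis i)
  have hexp : ∀ t : ℝ,
      NormedSpace.exp (t • S) = U * diagonal (fun i => Real.exp (t * μ i)) * U⁻¹ := by
    intro t
    have : t • S = U * diagonal (t • μ) * U⁻¹ := by simp [hS_eq, diagonal_smul]
    rw [this, exp_conj _ _ hU, exp_diagonal, Pi.exp_def, Real.exp_eq_exp_ℝ]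
    rfl
  refine ⟨U * diagonal (fun i => if μ i = 0 then 1 else 0) * U⁻¹, ?_, ?_⟩
  · have hUinvU : U⁻¹ * U = 1 := nonsing_inv_mul _ ((isUnit_iff_isUnit_det U).1 hU)
    have hμ_ind : (fun i => μ i * if μ i = 0 then 1 else 0) = 0 := by
      ext i; split_ifs with h <;> simp [h]
    calc S * (U * diagonal (fun i => if μ i = 0 then 1 else 0) * U⁻¹)
        = U * (diagonal μ * (U⁻¹ * U) * diagonal fun i => if μ i = 0 then 1 else 0) * U⁻¹ := by
          simp only [hS_eq, Matrix.mul_assoc]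
      _ = 0 := by rw [hUinvU, Matrix.mul_one, diagonal_mul_diagonal, hμ_ind]; simp
  · simp_rw [hexp]
    refine ((continuous_id.matrix_diagonal.tendsto _).comp
      (tendsto_pi_nhds.2 fun i => ?_)).const_mul U |>.mul_const _
    exact Real.tendsto_exp_mul_atTop_of_nonpos (hμ i)

theorem exists_tendsto_exp_smul_of_posSemidef_neg_diagonal_mul {A : Matrix n n ℝ} {w : n → ℝ}
    (hw : ∀ i, 0 < w i) (hA : (-(diagonal w * A)).PosSemidef) :
    ∃ P, A * P = 0 ∧ Tendsto (fun t : ℝ => NormedSpace.exp (t • A)) atTop (𝓝 P) := by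
  have hsqrt : ∀ i, √(w i) ≠ 0 := fun i => (Real.sqrt_pos.2 (hw i)).ne'
  set E : Matrix n n ℝ := diagonal fun i => (√(w i))⁻¹
  set F : Matrix n n ℝ := diagonal fun i => √(w i)
  have hEF : E * F = 1 := by simp [E, F, diagonal_mul_diagonal, hsqrt]
  have hFE : F * E = 1 := by simp [E, F, diagonal_mul_diagonal, hsqrt]
  have hE : IsUnit E := ⟨⟨E, F, hEF, hFE⟩, rfl⟩
  have hEEw : E * E * diagonal w = 1 := by
    rw [diagonal_mul_diagonal, diagonal_mul_diagonal, ← diagonal_one]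
    congr 1; ext i
    field_simp
    rw [Real.sq_sqrt (hw i).le, div_self (hw i).ne']
  set T := E * (diagonal w * A) * E
  have hA_eq : A = E * T * E⁻¹ := by
    simp only [T, inv_eq_right_inv hEF, Matrix.mul_assoc, hEF, Matrix.mul_one]
    rw [← Matrix.mul_assoc, ← Matrix.mul_assoc, hEEw, Matrix.one_mul]
  have hT : (-T).PosSemidef := by
    simpa [T, E, Matrix.mul_neg, Matrix.neg_mul] using hA.conjTranspose_mul_mul_same E
  obtain ⟨Q, hTQ, hQ⟩ := exists_tendsto_exp_smul_of_posSemidef_neg hT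
  refine ⟨E * Q * E⁻¹, ?_, ?_⟩
  · calc A * (E * Q * E⁻¹) = E * (T * (E⁻¹ * E) * Q) * E⁻¹ := by
          rw [hA_eq]; simp only [Matrix.mul_assoc]
      _ = 0 := by
          rw [nonsing_inv_mul _ ((isUnit_iff_isUnit_det E).1 hE), Matrix.mul_one, hTQ]; simp
  · have hexp : ∀ t : ℝ, NormedSpace.exp (t • A) = E * NormedSpace.exp (t • T) * E⁻¹ :=
      fun t => by rw [← exp_conj _ _ hE, hA_eq, Matrix.mul_smul, Matrix.smul_mul]
    simp_rw [hexp]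
    exact (hQ.const_mul E).mul_const _

theorem vecMul_exp_of_vecMul_eq_zero {𝕂 : Type*} [RCLike 𝕂]
    {A : Matrix n n 𝕂} {u : n → 𝕂} (hu : u ᵥ* A = 0) : u ᵥ* NormedSpace.exp A = u := by
  have hsum : Summable fun k : ℕ => (k.factorial⁻¹ : 𝕂) • A ^ k := by
    open scoped Norms.Operator in exact NormedSpace.expSeries_summable' A
  let vecMulCLM : Matrix n n 𝕂 →L[𝕂] (n → 𝕂) := LinearMap.toContinuousLinearMap
    { toFun := (u ᵥ* ·), map_add' := fun M M' => vecMul_add M M' u,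
      map_smul' := fun c M => by simp [vecMul_smul] }
  rw [NormedSpace.exp_eq_tsum 𝕂]
  refine (vecMulCLM.map_tsum hsum).trans
    ((tsum_eq_single 0 fun k hk => ?_).trans (by simp [vecMulCLM]))
  obtain ⟨k, rfl⟩ := Nat.exists_eq_succ_of_ne_zero hk
  simp [vecMulCLM, pow_succ', ← vecMul_vecMul, hu]

theorem tendsto_exp_smul_mulVec_of_vecMul_eq_zero {A P : Matrix n n ℝ}
    (hP : Tendsto (fun t : ℝ => NormedSpace.exp (t • A)) atTop (𝓝 P)) (hAP : A * P = 0)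
    {u v : n → ℝ} (hu : u ᵥ* A = 0) (huv : u ⬝ᵥ v ≠ 0)
    (hker : ∀ y, A *ᵥ y = 0 → ∃ c : ℝ, y = c • v) (x : n → ℝ) :
    Tendsto (fun t : ℝ => NormedSpace.exp (t • A) *ᵥ x) atTop (𝓝 ((u ⬝ᵥ x / u ⬝ᵥ v) • v)) := by
  have hx : Tendsto (fun t : ℝ => NormedSpace.exp (t • A) *ᵥ x) atTop (𝓝 (P *ᵥ x)) :=
    ((continuous_id.matrix_mulVec continuous_const).tendsto P).comp hP
  obtain ⟨c, hc⟩ := hker (P *ᵥ x) (by rw [mulVec_mulVec, hAP, zero_mulVec])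
  have hconserved : ∀ t : ℝ, u ⬝ᵥ (NormedSpace.exp (t • A) *ᵥ x) = u ⬝ᵥ x := fun t => by
    rw [dotProduct_mulVec, vecMul_exp_of_vecMul_eq_zero (by rw [vecMul_smul, hu, smul_zero])]
  have hlimit : u ⬝ᵥ (P *ᵥ x) = u ⬝ᵥ x :=
    tendsto_nhds_unique (((continuous_const.dotProduct continuous_id).tendsto _).comp hx)
      (tendsto_const_nhds.congr fun t => (hconserved t).symm)
  rw [hc, dotProduct_smul, smul_eq_mul] at hlimit
  rwa [← hlimit, mul_div_cancel_right₀ _ huv, ← hc]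

end Matrix

variable {N : ℕ} {ε α : Fin N → ℝ}

theorem dragMatrix_mulVec_zero (x : Fin (N + 1) → ℝ) :
    (dragMatrix N ε α *ᵥ x) 0 = ∑ k, α k * (x k.succ - ε k * x 0) := by
  simp only [mulVec, dotProduct, Fin.sum_univ_succ, dragMatrix, of_apply, dite_true,
    Fin.succ_ne_zero, dite_false, Fin.pred_succ, ← Finset.sum_neg_distrib]
  rw [Finset.sum_mul, ← Finset.sum_add_distrib]
  exact Finset.sum_congr rfl fun k _ => by ring

theorem dragMatrix_mulVec_succ (x : Fin (N + 1) → ℝ) (k : Fin N) :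
    (dragMatrix N ε α *ᵥ x) k.succ = -(α k * (x k.succ - ε k * x 0)) := by
  simp [mulVec, dotProduct, Fin.sum_univ_succ, dragMatrix]
  ring

theorem one_vecMul_dragMatrix : (1 : Fin (N + 1) → ℝ) ᵥ* dragMatrix N ε α = 0 := by
  ext j
  have hj := dotProduct_mulVec 1 (dragMatrix N ε α) (Pi.single j 1)
  rw [dotProduct_single_one] at hj
  rw [Pi.zero_apply, ← hj, one_dotProduct, Fin.sum_univ_succ]
  simp [dragMatrix_mulVec_zero, dragMatrix_mulVec_succ]

theorem eq_smul_of_dragMatrix_mulVec_eq_zero (hα : ∀ k, α k ≠ 0) {x : Fin (N + 1) → ℝ}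
    (hx : dragMatrix N ε α *ᵥ x = 0) : x = x 0 • (Fin.cons 1 ε : Fin (N + 1) → ℝ) := by
  ext i
  refine Fin.cases (by simp) (fun k => ?_) i
  have hk := congrFun hx k.succ
  rw [dragMatrix_mulVec_succ, Pi.zero_apply, neg_eq_zero, mul_eq_zero] at hk
  have := hk.resolve_left (hα k)
  simp only [Pi.smul_apply, Fin.cons_succ, smul_eq_mul]
  linarith

noncomputable def dragWeights (ε : Fin N → ℝ) : Fin (N + 1) → ℝ :=
  Fin.cons 1 fun k => (ε k)⁻¹

theorem dragWeights_pos (hε : ∀ k, 0 < ε k) (i : Fin (N + 1)) : 0 < dragWeights ε i :=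
  Fin.cases one_pos (fun k => inv_pos.2 (hε k)) i

theorem dotProduct_diagonal_dragWeights_mul_dragMatrix_mulVec (hε : ∀ k, ε k ≠ 0)
    (x y : Fin (N + 1) → ℝ) :
    y ⬝ᵥ (diagonal (dragWeights ε) * dragMatrix N ε α) *ᵥ x
      = -∑ k, α k / ε k * ((y k.succ - ε k * y 0) * (x k.succ - ε k * x 0)) := by
  rw [← mulVec_mulVec, dotProduct, Fin.sum_univ_succ]
  simp only [mulVec_diagonal, dragWeights, Fin.cons_zero, Fin.cons_succ, one_mul,
    dragMatrix_mulVec_zero, dragMatrix_mulVec_succ, Finset.mul_sum, ← Finset.sum_neg_distrib,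
    ← Finset.sum_add_distrib]
  refine Finset.sum_congr rfl fun k _ => ?_
  field_simp [hε k]
  ring

theorem posSemidef_neg_diagonal_dragWeights_mul_dragMatrix (hε : ∀ k, 0 < ε k)
    (hα : ∀ k, 0 ≤ α k) : (-(diagonal (dragWeights ε) * dragMatrix N ε α)).PosSemidef := by
  have hform := dotProduct_diagonal_dragWeights_mul_dragMatrix_mulVec (α := α) fun k => (hε k).ne'
  refine .of_dotProduct_mulVec_nonneg (IsHermitian.neg (IsHermitian.ext fun i j => ?_)) fun x => ?_
  · have hij := hform (Pi.single j 1) (Pi.single i 1)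
    have hji := hform (Pi.single i 1) (Pi.single j 1)
    simp only [mulVec_single_one, single_one_dotProduct, col_apply] at hij hji
    rw [star_trivial, hij, hji]
    exact congrArg _ (Finset.sum_congr rfl fun k _ => by ring)
  · rw [star_trivial, neg_mulVec, dotProduct_neg, hform, neg_neg]
    exact Finset.sum_nonneg fun k _ =>
      mul_nonneg (div_nonneg (hα k) (hε k).le) (mul_self_nonneg _)

theorem stmt_7_general (N : ℕ) (ε α : Fin N → ℝ)
    (hε : ∀ i, 0 < ε i) (hα : ∀ i, 0 < α i)
    (ρg : ℝ) (vg : ℝ) (vd : Fin N → ℝ)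
    (U₀ : Fin (N + 1) → ℝ) (hU₀ : U₀ = ρg • (Fin.cons vg (fun i => ε i * vd i) : Fin (N + 1) → ℝ))
    (VCM : ℝ) (hVCM : VCM = (vg + ∑ i, ε i * vd i) / (1 + ∑ i, ε i))
    (L : Fin (N + 1) → ℝ) (hL : L = (ρg * VCM) • (Fin.cons 1 ε : Fin (N + 1) → ℝ)) :
    Tendsto (fun t : ℝ => (NormedSpace.exp (t • dragMatrix N ε α)).mulVec U₀)
      atTop (nhds L) := by
  obtain ⟨P, hΩP, hP⟩ := exists_tendsto_exp_smul_of_posSemidef_neg_diagonal_mul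
    (dragWeights_pos hε) (posSemidef_neg_diagonal_dragWeights_mul_dragMatrix hε fun k => (hα k).le)
  have hmass : (1 : Fin (N + 1) → ℝ) ⬝ᵥ Fin.cons 1 ε = 1 + ∑ k, ε k := by
    simp [one_dotProduct, Fin.sum_univ_succ]
  have hmass_pos : 0 < 1 + ∑ k, ε k :=
    add_pos_of_pos_of_nonneg one_pos (Finset.sum_nonneg fun k _ => (hε k).le)
  have hmomentum : (1 : Fin (N + 1) → ℝ) ⬝ᵥ U₀ = ρg * (vg + ∑ k, ε k * vd k) := by
    simp [hU₀, one_dotProduct, Fin.sum_univ_succ]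
  convert tendsto_exp_smul_mulVec_of_vecMul_eq_zero hP hΩP one_vecMul_dragMatrix
    (by rw [hmass]; exact hmass_pos.ne') (fun y hy => ⟨y 0, eq_smul_of_dragMatrix_mulVec_eq_zero
      (fun k => (hα k).ne') hy⟩) U₀
  rw [hL, hVCM, hmomentum, hmass, mul_div_assoc]

/-- As `t → ∞`, the solution `e^{tΩ}U₀` of the drag ODE converges to
`ρ_g · V_CM · (1, ε₁, ..., ε_N)ᵀ`, where `V_CM` is the centre-of-mass velocity. -/
theorem stmt_7 (N : ℕ) (hN : 1 ≤ N) (ε α : Fin N → ℝ)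
    (hε : ∀ i, 0 < ε i) (hα : ∀ i, 0 < α i)
    (ρg : ℝ) (hρg : 0 < ρg) (vg : ℝ) (vd : Fin N → ℝ)
    (U₀ : Fin (N + 1) → ℝ) (hU₀ : U₀ = ρg • (Fin.cons vg (fun i => ε i * vd i) : Fin (N + 1) → ℝ))
    (VCM : ℝ) (hVCM : VCM = (vg + ∑ i, ε i * vd i) / (1 + ∑ i, ε i))
    (L : Fin (N + 1) → ℝ) (hL : L = (ρg * VCM) • (Fin.cons 1 ε : Fin (N + 1) → ℝ)) :
    Tendsto (fun t : ℝ => (NormedSpace.exp (t • dragMatrix N ε α)).mulVec U₀)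
      atTop (nhds L) :=
  stmt_7_general N ε α hε hα ρg vg vd U₀ hU₀ VCM hVCM L hL
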